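/- arXiv:1302.4676 — 2 statements merged into one kernel-verified Lean document; each statement's English description precedes it below -/
import Mathlib

section
/- Let $(p_n^f)_{n \in R}$ and $(p_n^c)_{n \in R}$ be families of numbers in $[0,1]$ indexed by a finite set $R$, and suppose there is $\Delta \in [0,1]$ such that $1 - p_n^c \le (1 - p_n^f) + p_n^f \Delta$ and $1 - p_n^f \le (1 - p_n^c) + p_n^c \Delta$ for all $n \in R$. Then $\left| \prod_{n \in R}(1 - p_n^f) - \prod_{n \in R}(1 - p_n^c) \right| \le \Delta$. -/
private lemma prod_aux {ι : Type*} (Δ : ℝ) (hΔ0 : 0 ≤ Δ) (hΔ1 : Δ ≤ 1)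
    (R : Finset ι) (q : ι → ℝ) (hq : ∀ n ∈ R, q n ∈ Set.Icc (0 : ℝ) 1) :
    ∏ n ∈ R, ((1 - q n) + q n * Δ) ≤ (1 - Δ) * ∏ n ∈ R, (1 - q n) + Δ := by
  classical
  revert hq
  induction R using Finset.induction_on with
  | empty => intro _; simp
  | @insert a s ha ih =>
    intro hq
    have hq' : ∀ n ∈ s, q n ∈ Set.Icc (0:ℝ) 1 := fun n hn => hq n (Finset.mem_insert_of_mem hn)
    obtain ⟨hqa0, hqa1⟩ := hq a (Finset.mem_insert_self _ _)
    have IH := ih hq'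
    have hP0 : 0 ≤ ∏ n ∈ s, (1 - q n) :=
      Finset.prod_nonneg fun n hn => by linarith [(hq' n hn).2]
    have hP1 : ∏ n ∈ s, (1 - q n) ≤ 1 :=
      Finset.prod_le_one (fun n hn => by linarith [(hq' n hn).2])
        (fun n hn => by linarith [(hq' n hn).1])
    have hQ0 : 0 ≤ ∏ n ∈ s, ((1 - q n) + q n * Δ) :=
      Finset.prod_nonneg fun n hn => by nlinarith [(hq' n hn).1, (hq' n hn).2]
    have hf0 : (0:ℝ) ≤ (1 - q a) + q a * Δ := by nlinarith
    rw [Finset.prod_insert ha, Finset.prod_insert ha]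
    nlinarith [mul_le_mul_of_nonneg_left IH hf0,
      mul_nonneg (mul_nonneg hqa0 hΔ0) (sub_nonneg.mpr hΔ1)]

/-- If `1 - pₙᶜ ≤ (1 - pₙᶠ) + pₙᶠ Δ` and `1 - pₙᶠ ≤ (1 - pₙᶜ) + pₙᶜ Δ` for all `n` in a
finite index set, with all `pₙᶠ, pₙᶜ, Δ ∈ [0,1]`, then the products of the `1 - p` terms
differ by at most `Δ`. -/
theorem product_survival_probability_close {ι : Type*} (R : Finset ι)
    (pf pc : ι → ℝ)
    (hpf : ∀ n ∈ R, pf n ∈ Set.Icc (0 : ℝ) 1)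
    (hpc : ∀ n ∈ R, pc n ∈ Set.Icc (0 : ℝ) 1)
    (Δ : ℝ) (hΔ : Δ ∈ Set.Icc (0 : ℝ) 1)
    (h1 : ∀ n ∈ R, 1 - pc n ≤ (1 - pf n) + pf n * Δ)
    (h2 : ∀ n ∈ R, 1 - pf n ≤ (1 - pc n) + pc n * Δ) :
    |(∏ n ∈ R, (1 - pf n)) - ∏ n ∈ R, (1 - pc n)| ≤ Δ := by
  obtain ⟨hΔ0, hΔ1⟩ := hΔ
  have hPf0 : 0 ≤ ∏ n ∈ R, (1 - pf n) :=
    Finset.prod_nonneg fun n hn => by linarith [(hpf n hn).2]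
  have hPc0 : 0 ≤ ∏ n ∈ R, (1 - pc n) :=
    Finset.prod_nonneg fun n hn => by linarith [(hpc n hn).2]
  have key1 : ∏ n ∈ R, (1 - pc n) ≤ ∏ n ∈ R, (1 - pf n) + Δ := by
    calc ∏ n ∈ R, (1 - pc n) ≤ ∏ n ∈ R, ((1 - pf n) + pf n * Δ) :=
          Finset.prod_le_prod (fun n hn => by linarith [(hpc n hn).2]) h1
      _ ≤ (1 - Δ) * ∏ n ∈ R, (1 - pf n) + Δ := prod_aux Δ hΔ0 hΔ1 R pf hpf
      _ ≤ ∏ n ∈ R, (1 - pf n) + Δ := by nlinarith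
  have key2 : ∏ n ∈ R, (1 - pf n) ≤ ∏ n ∈ R, (1 - pc n) + Δ := by
    calc ∏ n ∈ R, (1 - pf n) ≤ ∏ n ∈ R, ((1 - pc n) + pc n * Δ) :=
          Finset.prod_le_prod (fun n hn => by linarith [(hpf n hn).2]) h2
      _ ≤ (1 - Δ) * ∏ n ∈ R, (1 - pc n) + Δ := prod_aux Δ hΔ0 hΔ1 R pc hpc
      _ ≤ ∏ n ∈ R, (1 - pc n) + Δ := by nlinarith
  rw [abs_sub_le_iff]
  constructor <;> linarith
end

section
/- Let $s_n, s_{n+1}, t_n, t_{n+1}, \beta_f, \beta_c \in \mathbb{R}$, $h > 0$, $u \in (0,1)$, and define $D^f = \tfrac{1}{2}\sqrt{(s_{n+1}-s_n)^2 - 2\beta_f^2 h \log u}$ and $D^c = \tfrac{1}{2}\sqrt{(t_{n+1}-t_n)^2 - 2\beta_c^2 h \log u}$ (both well-defined since $\log u < 0$). Then $|D^f - D^c| \le \tfrac{1}{2}(|s_{n+1}-t_{n+1}| + |s_n - t_n|) + \tfrac{1}{\sqrt{2}} |\beta_f - \beta_c| \sqrt{h |\log u|}$. -/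
lemma sqrt_sq_add_sq_le (a b c d : ℝ) :
    Real.sqrt (a ^ 2 + c ^ 2) ≤ Real.sqrt (b ^ 2 + d ^ 2) + |a - b| + |c - d| := by
  set s := Real.sqrt (b ^ 2 + d ^ 2) with hs
  have hs2 : s ^ 2 = b ^ 2 + d ^ 2 := Real.sq_sqrt (by positivity)
  have hsnn : 0 ≤ s := Real.sqrt_nonneg _
  have hb : |b| ≤ s := by
    rw [← Real.sqrt_sq_eq_abs]; exact Real.sqrt_le_sqrt (by nlinarith [sq_nonneg d])
  have hd : |d| ≤ s := by
    rw [← Real.sqrt_sq_eq_abs]; exact Real.sqrt_le_sqrt (by nlinarith [sq_nonneg b])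
  have ha : |a| ≤ |b| + |a - b| := by
    calc |a| = |b + (a - b)| := by ring_nf
    _ ≤ |b| + |a - b| := abs_add_le _ _
  have hc : |c| ≤ |d| + |c - d| := by
    calc |c| = |d + (c - d)| := by ring_nf
    _ ≤ |d| + |c - d| := abs_add_le _ _
  have key : a ^ 2 + c ^ 2 ≤ (s + |a - b| + |c - d|) ^ 2 := by
    nlinarith [mul_self_le_mul_self (abs_nonneg a) ha, mul_self_le_mul_self (abs_nonneg c) hc,
      mul_le_mul_of_nonneg_right hb (abs_nonneg (a - b)),
      mul_le_mul_of_nonneg_right hd (abs_nonneg (c - d)),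
      sq_abs a, sq_abs c, sq_abs b, sq_abs d, hs2,
      mul_nonneg (abs_nonneg (a - b)) (abs_nonneg (c - d))]
  calc Real.sqrt (a ^ 2 + c ^ 2) ≤ Real.sqrt ((s + |a - b| + |c - d|) ^ 2) :=
        Real.sqrt_le_sqrt key
    _ = s + |a - b| + |c - d| := Real.sqrt_sq (by positivity)

lemma abs_sqrt_sub_sqrt (a b c d : ℝ) :
    |Real.sqrt (a ^ 2 + c ^ 2) - Real.sqrt (b ^ 2 + d ^ 2)| ≤ |a - b| + |c - d| := by
  rw [abs_sub_le_iff]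
  constructor
  · have := sqrt_sq_add_sq_le a b c d; linarith
  · have := sqrt_sq_add_sq_le b a d c
    rw [abs_sub_comm b a, abs_sub_comm d c] at this; linarith

/-- Key pathwise estimate in the lookback option analysis: the half-widths in the
conditional-minimum formulas for the fine and coarse paths, with a shared uniform
random number `u`, satisfy
`|Dᶠ - Dᶜ| ≤ ½(|sₙ₊₁ - tₙ₊₁| + |sₙ - tₙ|) + (1/√2) |βf - βc| √(h |log u|)`. -/
theorem lookback_halfwidth_estimate (sn sn1 tn tn1 βf βc h u : ℝ)
    (hh : 0 < h) (hu : u ∈ Set.Ioo (0 : ℝ) 1)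
    (Df Dc : ℝ)
    (hDf : Df = (1 / 2) * Real.sqrt ((sn1 - sn) ^ 2 - 2 * βf ^ 2 * h * Real.log u))
    (hDc : Dc = (1 / 2) * Real.sqrt ((tn1 - tn) ^ 2 - 2 * βc ^ 2 * h * Real.log u)) :
    |Df - Dc| ≤ (1 / 2) * (|sn1 - tn1| + |sn - tn|)
      + (1 / Real.sqrt 2) * |βf - βc| * Real.sqrt (h * |Real.log u|) := by
  obtain ⟨hu0, hu1⟩ := hu
  have hlog : Real.log u < 0 := Real.log_neg hu0 hu1
  have habs : |Real.log u| = -Real.log u := abs_of_neg hlog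
  set K : ℝ := h * |Real.log u| with hK
  have hKnn : 0 ≤ K := by positivity
  -- rewrite the radicands as sums of squares
  have hcf : (Real.sqrt (βf ^ 2 * (2 * K))) ^ 2 = βf ^ 2 * (2 * K) :=
    Real.sq_sqrt (by positivity)
  have hcc : (Real.sqrt (βc ^ 2 * (2 * K))) ^ 2 = βc ^ 2 * (2 * K) :=
    Real.sq_sqrt (by positivity)
  have hf : (sn1 - sn) ^ 2 - 2 * βf ^ 2 * h * Real.log u
      = (sn1 - sn) ^ 2 + (Real.sqrt (βf ^ 2 * (2 * K))) ^ 2 := by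
    rw [hcf, hK, habs]; ring
  have hc : (tn1 - tn) ^ 2 - 2 * βc ^ 2 * h * Real.log u
      = (tn1 - tn) ^ 2 + (Real.sqrt (βc ^ 2 * (2 * K))) ^ 2 := by
    rw [hcc, hK, habs]; ring
  have hmain : |Df - Dc| ≤ (1 / 2) * (|(sn1 - sn) - (tn1 - tn)|
      + |Real.sqrt (βf ^ 2 * (2 * K)) - Real.sqrt (βc ^ 2 * (2 * K))|) := by
    rw [hDf, hDc, hf, hc, ← mul_sub, abs_mul, abs_of_pos (by norm_num : (0:ℝ) < 1/2)]
    have := abs_sqrt_sub_sqrt (sn1 - sn) (tn1 - tn)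
      (Real.sqrt (βf ^ 2 * (2 * K))) (Real.sqrt (βc ^ 2 * (2 * K)))
    nlinarith [this]
  have h1 : |(sn1 - sn) - (tn1 - tn)| ≤ |sn1 - tn1| + |sn - tn| := by
    calc |(sn1 - sn) - (tn1 - tn)| = |(sn1 - tn1) + -(sn - tn)| := by ring_nf
      _ ≤ |sn1 - tn1| + |-(sn - tn)| := abs_add_le _ _
      _ = |sn1 - tn1| + |sn - tn| := by rw [abs_neg]
  have hfm : Real.sqrt (βf ^ 2 * (2 * K)) = |βf| * Real.sqrt (2 * K) := by
    rw [Real.sqrt_mul (sq_nonneg _), Real.sqrt_sq_eq_abs]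
  have hcm : Real.sqrt (βc ^ 2 * (2 * K)) = |βc| * Real.sqrt (2 * K) := by
    rw [Real.sqrt_mul (sq_nonneg _), Real.sqrt_sq_eq_abs]
  have h2 : |Real.sqrt (βf ^ 2 * (2 * K)) - Real.sqrt (βc ^ 2 * (2 * K))|
      ≤ |βf - βc| * Real.sqrt (2 * K) := by
    rw [hfm, hcm, ← sub_mul, abs_mul, abs_of_nonneg (Real.sqrt_nonneg _)]
    exact mul_le_mul_of_nonneg_right (abs_abs_sub_abs_le_abs_sub _ _) (Real.sqrt_nonneg _)
  have h3 : (1 / 2) * (|βf - βc| * Real.sqrt (2 * K))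
      = (1 / Real.sqrt 2) * |βf - βc| * Real.sqrt K := by
    have s2 : Real.sqrt 2 * Real.sqrt 2 = 2 := Real.mul_self_sqrt (by norm_num)
    have hinv : (1:ℝ) / Real.sqrt 2 = Real.sqrt 2 / 2 := by
      rw [div_eq_div_iff (ne_of_gt (by positivity : (0:ℝ) < Real.sqrt 2)) (by norm_num : (2:ℝ) ≠ 0), one_mul, s2]
    rw [Real.sqrt_mul (by norm_num : (0:ℝ) ≤ 2), hinv]; ring
  calc |Df - Dc| ≤ (1 / 2) * (|(sn1 - sn) - (tn1 - tn)|
        + |Real.sqrt (βf ^ 2 * (2 * K)) - Real.sqrt (βc ^ 2 * (2 * K))|) := hmain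
    _ ≤ (1 / 2) * ((|sn1 - tn1| + |sn - tn|) + |βf - βc| * Real.sqrt (2 * K)) := by
        have := h2; nlinarith [h1, h2]
    _ = (1 / 2) * (|sn1 - tn1| + |sn - tn|) + (1 / 2) * (|βf - βc| * Real.sqrt (2 * K)) := by
        ring
    _ = (1 / 2) * (|sn1 - tn1| + |sn - tn|)
        + (1 / Real.sqrt 2) * |βf - βc| * Real.sqrt K := by rw [h3]
end
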